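/- arXiv:1906.04321 — 5 statements merged into one kernel-verified Lean document; each statement's English description precedes it below -/
import Mathlib

section
/- Improve-or-localize: let f : E → ℝ be C¹ on a real inner product space, fix j ≥ 1, η = 1/ℓ with ℓ > 0, and a sequence s₀, s₁, …, s_j with s_{i+1} = s_i − η_i ∇f(s_i) for step sizes 0 ≤ η_i ≤ η. Assume ∇f is ℓ-Lipschitz along each segment [s_i, s_{i+1}]. Then ‖s_j − s₀‖ ≤ sqrt(2 η j (f(s₀) − f(s_j))). -/
/-!
If `∇f` is `ℓ`-Lipschitz along `[x, y]`, then `f y ≤ f x + ⟪∇f x, y - x⟫ + ℓ/2 ‖y - x‖²`; for a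
gradient step `y = x - a ∇f x` with `a ℓ ≤ 1` this gives the sufficient decrease
`ℓ ‖y - x‖² ≤ 2 (f x - f y)`. Writing `s_j - s_0` as the sum of the `j` steps, Cauchy–Schwarz
bounds `‖s_j - s_0‖²` by `j` times the sum of the squared steps, and the decreases telescope.
-/

open Set Finset
open scoped Gradient RealInnerProductSpace

section

variable {E : Type*} [NormedAddCommGroup E] [InnerProductSpace ℝ E] [CompleteSpace E]

theorem hasDerivAt_comp_add_smul_of_differentiableAt {f : E → ℝ} {x d : E} {t : ℝ}
    (hf : DifferentiableAt ℝ f (x + t • d)) :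
    HasDerivAt (fun t : ℝ => f (x + t • d)) ⟪∇ f (x + t • d), d⟫ t := by
  have hline : HasDerivAt (fun t : ℝ => x + t • d) d t := by
    simpa using ((hasDerivAt_id t).smul_const d).const_add x
  exact hf.hasGradientAt.hasFDerivAt.comp_hasDerivAt t hline

theorem le_add_inner_gradient_add_sq_norm_of_lipschitz_on_segment {f : E → ℝ} {ℓ : ℝ} {x y : E}
    (hf : ∀ z ∈ segment ℝ x y, DifferentiableAt ℝ f z)
    (hlip : ∀ z ∈ segment ℝ x y, ‖∇ f z - ∇ f x‖ ≤ ℓ * ‖z - x‖) :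
    f y ≤ f x + ⟪∇ f x, y - x⟫ + ℓ / 2 * ‖y - x‖ ^ 2 := by
  set d := y - x
  have hmem : ∀ t ∈ Icc (0 : ℝ) 1, x + t • d ∈ segment ℝ x y := fun t ht => by
    rw [segment_eq_image']; exact ⟨t, ht, rfl⟩
  set φ : ℝ → ℝ := fun t => f (x + t • d) - t * ⟪∇ f x, d⟫ - ℓ / 2 * t ^ 2 * ‖d‖ ^ 2
  have hφ : ∀ t ∈ Icc (0 : ℝ) 1, HasDerivAt φ
      (⟪∇ f (x + t • d), d⟫ - ⟪∇ f x, d⟫ - ℓ * t * ‖d‖ ^ 2) t := fun t ht => by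
    refine (((hasDerivAt_comp_add_smul_of_differentiableAt (hf _ (hmem t ht))).sub
      ((hasDerivAt_id t).mul_const ⟪∇ f x, d⟫)).sub
      (((hasDerivAt_pow 2 t).const_mul (ℓ / 2)).mul_const (‖d‖ ^ 2))).congr_deriv ?_
    simp only [Nat.cast_ofNat, Nat.add_one_sub_one, pow_one]
    ring
  have hφ' : ∀ t ∈ Icc (0 : ℝ) 1,
      ⟪∇ f (x + t • d), d⟫ - ⟪∇ f x, d⟫ ≤ ℓ * t * ‖d‖ ^ 2 := fun t ht => by
    have hlip_t := hlip _ (hmem t ht)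
    rw [add_sub_cancel_left, norm_smul, Real.norm_of_nonneg ht.1] at hlip_t
    calc ⟪∇ f (x + t • d), d⟫ - ⟪∇ f x, d⟫
        = ⟪∇ f (x + t • d) - ∇ f x, d⟫ := (inner_sub_left _ _ _).symm
      _ ≤ ‖∇ f (x + t • d) - ∇ f x‖ * ‖d‖ := real_inner_le_norm _ _
      _ ≤ ℓ * (t * ‖d‖) * ‖d‖ := by gcongr
      _ = ℓ * t * ‖d‖ ^ 2 := by ring
  have hanti : AntitoneOn φ (Icc 0 1) :=
    antitoneOn_of_hasDerivWithinAt_nonpos (convex_Icc 0 1)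
      (fun t ht => (hφ t ht).continuousAt.continuousWithinAt)
      (fun t ht => (hφ t (interior_subset ht)).hasDerivWithinAt)
      (fun t ht => sub_nonpos.2 (hφ' t (interior_subset ht)))
  have h01 := hanti (left_mem_Icc.2 zero_le_one) (right_mem_Icc.2 zero_le_one) zero_le_one
  simp only [φ, zero_smul, add_zero, one_smul, zero_mul, sub_zero, one_mul, one_pow,
    add_sub_cancel, d] at h01
  linarith

theorem mul_norm_smul_gradient_sq_le_of_gradient_step {f : E → ℝ} {ℓ a : ℝ} {x : E}
    (ha : 0 ≤ a) (haℓ : a * ℓ ≤ 1)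
    (hf : ∀ z ∈ segment ℝ x (x - a • ∇ f x), DifferentiableAt ℝ f z)
    (hlip : ∀ z ∈ segment ℝ x (x - a • ∇ f x), ‖∇ f z - ∇ f x‖ ≤ ℓ * ‖z - x‖) :
    ℓ * ‖a • ∇ f x‖ ^ 2 ≤ 2 * (f x - f (x - a • ∇ f x)) := by
  have hdesc := le_add_inner_gradient_add_sq_norm_of_lipschitz_on_segment hf hlip
  rw [sub_sub_cancel_left, norm_neg, inner_neg_right, real_inner_smul_right,
    real_inner_self_eq_norm_sq] at hdesc
  rw [norm_smul, Real.norm_of_nonneg ha, mul_pow] at hdesc ⊢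
  have hg := sq_nonneg ‖∇ f x‖
  nlinarith [mul_le_mul_of_nonneg_left haℓ (mul_nonneg ha hg)]

end

theorem sq_norm_sub_le_mul_sum_sq_norm_sub {F : Type*} [SeminormedAddCommGroup F]
    (s : ℕ → F) (n : ℕ) :
    ‖s n - s 0‖ ^ 2 ≤ n * ∑ i ∈ range n, ‖s (i + 1) - s i‖ ^ 2 := calc
  ‖s n - s 0‖ ^ 2 ≤ (∑ i ∈ range n, ‖s (i + 1) - s i‖) ^ 2 := by
    rw [← sum_range_sub]; gcongr; exact norm_sum_le _ _
  _ ≤ n * ∑ i ∈ range n, ‖s (i + 1) - s i‖ ^ 2 := by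
    simpa using sq_sum_le_card_mul_sum_sq (s := range n) (f := fun i => ‖s (i + 1) - s i‖)

theorem stmt_2_general {E : Type*} [NormedAddCommGroup E] [InnerProductSpace ℝ E]
    [CompleteSpace E] (f : E → ℝ) (hf : ContDiff ℝ 1 f) (ℓ η : ℝ)
    (hℓ : 0 < ℓ) (hη : η = 1 / ℓ) (j : ℕ)
    (s : ℕ → E) (ηs : ℕ → ℝ)
    (hηs : ∀ i < j, ηs i ∈ Set.Icc 0 η)
    (hrec : ∀ i < j, s (i + 1) = s i - ηs i • gradient f (s i))
    (hlip : ∀ i < j, ∀ u ∈ segment ℝ (s i) (s (i + 1)), ∀ v ∈ segment ℝ (s i) (s (i + 1)),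
      ‖gradient f u - gradient f v‖ ≤ ℓ * ‖u - v‖) :
    ‖s j - s 0‖ ≤ Real.sqrt (2 * η * j * (f (s 0) - f (s j))) := by
  have hηℓ : η * ℓ = 1 := by rw [hη, one_div_mul_cancel hℓ.ne']
  have hstep : ∀ i < j, ‖s (i + 1) - s i‖ ^ 2 ≤ 2 * η * (f (s i) - f (s (i + 1))) := by
    intro i hi
    obtain ⟨hηs₀, hηsη⟩ := hηs i hi
    have hdec := mul_norm_smul_gradient_sq_le_of_gradient_step hηs₀
      (by rw [← hηℓ]; gcongr) (fun z _ => hf.differentiable one_ne_zero z)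
      (fun z hz => hlip i hi z (hrec i hi ▸ hz) _ (left_mem_segment ℝ _ _))
    rw [← hrec i hi] at hdec
    calc ‖s (i + 1) - s i‖ ^ 2 = η * (ℓ * ‖ηs i • ∇ f (s i)‖ ^ 2) := by
          rw [hrec i hi, sub_sub_cancel_left, norm_neg, ← mul_assoc, hηℓ, one_mul]
      _ ≤ η * (2 * (f (s i) - f (s (i + 1)))) := by
          gcongr; exact hηs₀.trans hηsη
      _ = 2 * η * (f (s i) - f (s (i + 1))) := by ring
  have hsq : ‖s j - s 0‖ ^ 2 ≤ 2 * η * j * (f (s 0) - f (s j)) := calc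
    ‖s j - s 0‖ ^ 2 ≤ j * ∑ i ∈ range j, ‖s (i + 1) - s i‖ ^ 2 :=
      sq_norm_sub_le_mul_sum_sq_norm_sub s j
    _ ≤ j * ∑ i ∈ range j, 2 * η * (f (s i) - f (s (i + 1))) := by
      gcongr with i hi; exact hstep i (mem_range.1 hi)
    _ = 2 * η * j * (f (s 0) - f (s j)) := by
      rw [← mul_sum, sum_range_sub' (fun i => f (s i))]; ring
  exact Real.le_sqrt_of_sq_le hsq

theorem stmt_2 {E : Type*} [NormedAddCommGroup E] [InnerProductSpace ℝ E]
    [CompleteSpace E] (f : E → ℝ) (hf : ContDiff ℝ 1 f) (ℓ η : ℝ)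
    (hℓ : 0 < ℓ) (hη : η = 1 / ℓ) (j : ℕ) (hj : 1 ≤ j)
    (s : ℕ → E) (ηs : ℕ → ℝ)
    (hηs : ∀ i < j, ηs i ∈ Set.Icc 0 η)
    (hrec : ∀ i < j, s (i + 1) = s i - ηs i • gradient f (s i))
    (hlip : ∀ i < j, ∀ u ∈ segment ℝ (s i) (s (i + 1)), ∀ v ∈ segment ℝ (s i) (s (i + 1)),
      ‖gradient f u - gradient f v‖ ≤ ℓ * ‖u - v‖) :
    ‖s j - s 0‖ ≤ Real.sqrt (2 * η * j * (f (s 0) - f (s j))) :=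
  stmt_2_general f hf ℓ η hℓ hη j s ηs hηs hrec hlip
end

section
/- Cylinder volume bound: let E be a d-dimensional real inner product space, e₁ a unit vector, and S ⊆ B_r(0) (closed ball of radius r) a measurable set such that any two points of S differing only in the e₁ direction (i.e., s − s' parallel to e₁) satisfy ‖s − s'‖ ≤ w. Then Vol(S) ≤ w · Vol(𝔹^{d−1}_r), where 𝔹^{d−1}_r is the (d−1)-dimensional ball of radius r. -/
/-!
Write `E = ℝ e ⊕ eᗮ`; the map `(t, y) ↦ t • e + y` from `ℝ × eᗮ` is measure preserving, so by
Fubini `vol S = ∫ vol(S_y) dy` over `y ∈ eᗮ`, where `S_y ⊆ ℝ` is the slice of `S` along the line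
`y + ℝ e`. Each slice has diameter at most `w` by hypothesis, and is empty unless `‖y‖ ≤ r`
(Pythagoras), so `vol S ≤ w · vol (closedBall (0 : eᗮ) r)`.
-/

open MeasureTheory Metric Module

theorem MeasureTheory.Measure.volume_prod_le_mul_of_ediam_slice_le {F : Type*}
    [MeasurableSpace F] (μ : Measure F) [SFinite μ] {A : Set (ℝ × F)} (hA : MeasurableSet A)
    {B : Set F} (hB : MeasurableSet B) (hAB : ∀ p ∈ A, p.2 ∈ B) {w : ℝ}
    (hw : ∀ y, ediam ((fun x ↦ (x, y)) ⁻¹' A) ≤ ENNReal.ofReal w) :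
    (volume.prod μ) A ≤ ENNReal.ofReal w * μ B := by
  have hslice (y : F) :
      volume ((fun x ↦ (x, y)) ⁻¹' A) ≤ B.indicator (fun _ ↦ ENNReal.ofReal w) y := by
    by_cases hy : y ∈ B
    · rw [Set.indicator_of_mem hy]
      exact (Real.volume_le_diam _).trans (hw y)
    · have : (fun x ↦ (x, y)) ⁻¹' A = ∅ :=
        Set.eq_empty_of_forall_notMem fun x hx ↦ hy (hAB _ hx)
      simp [this]
  calc (volume.prod μ) A = ∫⁻ y, volume ((fun x ↦ (x, y)) ⁻¹' A) ∂μ :=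
        Measure.prod_apply_symm hA
    _ ≤ ∫⁻ y, B.indicator (fun _ ↦ ENNReal.ofReal w) y ∂μ := lintegral_mono hslice
    _ = ENNReal.ofReal w * μ B := lintegral_indicator_const hB _

section InnerProductSpace

variable {E : Type*} [NormedAddCommGroup E] [InnerProductSpace ℝ E]

theorem norm_le_norm_smul_add_of_mem_orthogonal {e y : E} (hy : y ∈ (ℝ ∙ e)ᗮ) (t : ℝ) :
    ‖y‖ ≤ ‖t • e + y‖ := by
  have horth : inner ℝ (t • e) y = 0 := by
    rw [inner_smul_left, Submodule.mem_orthogonal_singleton_iff_inner_right.1 hy, mul_zero]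
  have := norm_add_sq_eq_norm_sq_add_norm_sq_real horth
  nlinarith [norm_nonneg y, norm_nonneg (t • e + y)]

variable [FiniteDimensional ℝ E] [MeasurableSpace E] [BorelSpace E]

theorem InnerProductSpace.volume_closedBall_eq_ofReal (x : E) {r : ℝ} (hr : 0 ≤ r) :
    volume (closedBall x r) = ENNReal.ofReal (Real.pi ^ ((finrank ℝ E : ℝ) / 2) *
      r ^ finrank ℝ E / Real.Gamma (1 + (finrank ℝ E : ℝ) / 2)) := by
  rcases subsingleton_or_nontrivial E with hE | hE
  · have hball : closedBall x r = parallelepiped (stdOrthonormalBasis ℝ E) := by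
      rw [Subsingleton.eq_univ_of_nonempty ⟨x, mem_closedBall_self hr⟩,
        Subsingleton.eq_univ_of_nonempty (s := parallelepiped (stdOrthonormalBasis ℝ E))
          ⟨0, 0, by simp, by simp⟩]
    simp [finrank_zero_of_subsingleton, hball, OrthonormalBasis.volume_parallelepiped,
      Real.Gamma_one]
  · rw [InnerProductSpace.volume_closedBall, ← ENNReal.ofReal_pow hr,
      ← ENNReal.ofReal_mul (by positivity), Real.sqrt_eq_rpow,
      ← Real.rpow_mul_natCast Real.pi_nonneg, add_comm]
    ring_nf

theorem measurePreserving_smul_add_orthogonal {e : E} (he : ‖e‖ = 1) :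
    MeasurePreserving (fun p : ℝ × (ℝ ∙ e)ᗮ ↦ p.1 • e + p.2) := by
  have := (((LinearIsometryEquiv.withLpProdCongr 2
    (LinearIsometryEquiv.toSpanUnitSingleton e he) (LinearIsometryEquiv.refl ℝ (ℝ ∙ e)ᗮ)).trans
    (ℝ ∙ e).orthogonalDecomposition.symm).measurePreserving).comp
    (WithLp.volume_preserving_toLp ℝ (ℝ ∙ e)ᗮ)
  convert this using 1
  ext p
  simp

theorem volume_le_mul_volume_closedBall_orthogonal {e : E} (he : ‖e‖ = 1) {S : Set E}
    (hS : MeasurableSet S) {r w : ℝ} (hSb : S ⊆ closedBall 0 r)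
    (hline : ∀ s ∈ S, ∀ s' ∈ S, (∃ c : ℝ, s - s' = c • e) → ‖s - s'‖ ≤ w) :
    volume S ≤ ENNReal.ofReal w * volume (closedBall (0 : (ℝ ∙ e)ᗮ) r) := by
  have hφ := measurePreserving_smul_add_orthogonal he
  rw [← hφ.measure_preimage hS.nullMeasurableSet, Measure.volume_eq_prod]
  refine Measure.volume_prod_le_mul_of_ediam_slice_le _ (hφ.measurable hS)
    measurableSet_closedBall (fun ⟨t, y⟩ hty ↦ ?_) (fun y ↦ ediam_le fun t₁ h₁ t₂ h₂ ↦ ?_)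
  · rw [mem_closedBall_zero_iff]
    exact (norm_le_norm_smul_add_of_mem_orthogonal y.2 t).trans
      (mem_closedBall_zero_iff.1 (hSb hty))
  · have hdiff : (t₁ • e + y : E) - (t₂ • e + y) = (t₁ - t₂) • e := by
      rw [add_sub_add_right_eq_sub, sub_smul]
    have := hline _ h₁ _ h₂ ⟨_, hdiff⟩
    rw [hdiff, norm_smul, he, mul_one] at this
    rw [edist_dist, Real.dist_eq]
    exact ENNReal.ofReal_le_ofReal this

end InnerProductSpace

theorem stmt_8 (d : ℕ) (hd : 1 ≤ d) (r w : ℝ) (hr : 0 < r) (hw : 0 < w)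
    (e₁ : EuclideanSpace ℝ (Fin d)) (he₁ : ‖e₁‖ = 1)
    (S : Set (EuclideanSpace ℝ (Fin d))) (hS : MeasurableSet S)
    (hSb : S ⊆ Metric.closedBall 0 r)
    (hline : ∀ s ∈ S, ∀ s' ∈ S, (∃ c : ℝ, s - s' = c • e₁) → ‖s - s'‖ ≤ w) :
    (volume S).toReal ≤
      w * (Real.pi ^ (((d : ℝ) - 1) / 2) * r ^ (d - 1) /
        Real.Gamma (1 + ((d : ℝ) - 1) / 2)) := by
  have : Fact (finrank ℝ (EuclideanSpace ℝ (Fin d)) = (d - 1) + 1) :=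
    ⟨by rw [finrank_euclideanSpace_fin]; omega⟩
  have hdim : finrank ℝ (ℝ ∙ e₁)ᗮ = d - 1 :=
    Submodule.finrank_orthogonal_span_singleton (by rintro rfl; simp at he₁)
  have hvol := volume_le_mul_volume_closedBall_orthogonal he₁ hS hSb hline
  rw [InnerProductSpace.volume_closedBall_eq_ofReal _ hr.le, hdim, Nat.cast_sub hd, Nat.cast_one,
    ← ENNReal.ofReal_mul hw.le] at hvol
  have hd' : (0 : ℝ) ≤ (d : ℝ) - 1 := by rw [sub_nonneg]; exact_mod_cast hd
  have hΓ := Real.Gamma_pos_of_pos (s := 1 + ((d : ℝ) - 1) / 2) (by positivity)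
  exact ENNReal.toReal_le_of_le_ofReal (by positivity) hvol
end

section
/- Uniform probability bound from the cylinder bound: if s₀ is drawn uniformly from the closed ball B_r(0) in ℝ^d and S ⊆ B_r(0) is measurable with Vol(S) ≤ w · Vol(𝔹^{d−1}_r) for some w > 0, then P(s₀ ∈ S) ≤ (w/r)·√(d/π). -/
open MeasureTheory

lemma gamma_half_aux (x : ℝ) (hx : 0 < x) :
    Real.Gamma (x + 1/2) ≤ Real.Gamma x * Real.sqrt x := by
  have h := Real.Gamma_mul_add_mul_le_rpow_Gamma_mul_rpow_Gamma hx
    (by linarith : (0:ℝ) < x + 1) (by norm_num : (0:ℝ) < 1/2)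
    (by norm_num : (0:ℝ) < 1/2) (by norm_num)
  rw [Real.Gamma_add_one hx.ne'] at h
  have he : (1/2 : ℝ) * x + (1/2) * (x+1) = x + 1/2 := by ring
  rw [he] at h
  have hG : 0 < Real.Gamma x := Real.Gamma_pos_of_pos hx
  calc Real.Gamma (x + 1/2) ≤ Real.Gamma x ^ (1/2:ℝ) * (x * Real.Gamma x) ^ (1/2:ℝ) := h
    _ = (Real.Gamma x * (x * Real.Gamma x)) ^ (1/2:ℝ) := by
        rw [← Real.mul_rpow hG.le (by positivity)]
    _ = Real.sqrt (x * Real.Gamma x ^ 2) := by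
        rw [← Real.sqrt_eq_rpow]; ring_nf
    _ = Real.Gamma x * Real.sqrt x := by
        rw [Real.sqrt_mul hx.le, Real.sqrt_sq hG.le]; ring

theorem stmt_9 (d : ℕ) (hd : 1 ≤ d) (r w : ℝ) (hr : 0 < r) (hw : 0 < w)
    (S : Set (EuclideanSpace ℝ (Fin d))) (hS : MeasurableSet S)
    (hSb : S ⊆ Metric.closedBall 0 r)
    (hvol : (volume S).toReal ≤
      w * (Real.pi ^ (((d : ℝ) - 1) / 2) * r ^ (d - 1) /
        Real.Gamma (1 + ((d : ℝ) - 1) / 2))) :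
    (volume S).toReal /
      (volume (Metric.closedBall (0 : EuclideanSpace ℝ (Fin d)) r)).toReal ≤
      (w / r) * Real.sqrt ((d : ℝ) / Real.pi) := by
  have hπ := Real.pi_pos
  have hdR : (1:ℝ) ≤ (d:ℝ) := by exact_mod_cast hd
  have hG1 : 0 < Real.Gamma ((d:ℝ)/2 + 1) := Real.Gamma_pos_of_pos (by linarith)
  have hG2 : 0 < Real.Gamma (((d:ℝ)+1)/2) := Real.Gamma_pos_of_pos (by linarith)
  haveI : Nonempty (Fin d) := ⟨⟨0, by omega⟩⟩
  -- volume of the ball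
  have hvb : (volume (Metric.closedBall (0 : EuclideanSpace ℝ (Fin d)) r)).toReal
      = r ^ d * (Real.sqrt Real.pi ^ d / Real.Gamma ((d:ℝ)/2 + 1)) := by
    rw [EuclideanSpace.volume_closedBall]
    rw [ENNReal.toReal_mul, ENNReal.toReal_pow, ENNReal.toReal_ofReal hr.le,
      ENNReal.toReal_ofReal (by positivity)]
    simp [Fintype.card_fin]
  have hvbpos : 0 < r ^ d * (Real.sqrt Real.pi ^ d / Real.Gamma ((d:ℝ)/2 + 1)) := by positivity
  rw [hvb, div_le_iff₀ hvbpos]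
  -- rewrite hvol
  have hcast : ((d:ℝ) - 1) = ((d-1 : ℕ) : ℝ) := by
    push_cast [hd]; ring
  have hpow : Real.pi ^ (((d : ℝ) - 1) / 2) = Real.sqrt Real.pi ^ (d-1) := by
    rw [hcast, Real.sqrt_eq_rpow, ← Real.rpow_natCast (Real.pi ^ ((1:ℝ)/2)) (d-1),
      ← Real.rpow_mul hπ.le]
    ring_nf
  have hGeq : Real.Gamma (1 + ((d:ℝ) - 1)/2) = Real.Gamma (((d:ℝ)+1)/2) := by
    ring_nf
  rw [hpow, hGeq] at hvol
  -- gamma bound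
  have hkey : Real.Gamma ((d:ℝ)/2 + 1) ≤ Real.sqrt d * Real.Gamma (((d:ℝ)+1)/2) := by
    have h := gamma_half_aux (((d:ℝ)+1)/2) (by linarith)
    have he : ((d:ℝ)+1)/2 + 1/2 = (d:ℝ)/2 + 1 := by ring
    rw [he] at h
    have hle : Real.sqrt (((d:ℝ)+1)/2) ≤ Real.sqrt d :=
      Real.sqrt_le_sqrt (by linarith)
    calc Real.Gamma ((d:ℝ)/2 + 1) ≤ Real.Gamma (((d:ℝ)+1)/2) * Real.sqrt (((d:ℝ)+1)/2) := h
      _ ≤ Real.sqrt d * Real.Gamma (((d:ℝ)+1)/2) := by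
          rw [mul_comm]; exact mul_le_mul_of_nonneg_right hle hG2.le
  -- main chain
  refine hvol.trans ?_
  have hrd : r ^ d = r ^ (d-1) * r := by
    rw [← pow_succ]; congr 1; omega
  have hπd : Real.sqrt Real.pi ^ d = Real.sqrt Real.pi ^ (d-1) * Real.sqrt Real.pi := by
    rw [← pow_succ]; congr 1; omega
  have hsq : Real.sqrt ((d:ℝ)/Real.pi) = Real.sqrt d / Real.sqrt Real.pi :=
    Real.sqrt_div (by positivity) _
  rw [hrd, hπd, hsq]
  have hG1' : Real.Gamma ((d:ℝ)/2 + 1) ≠ 0 := hG1.ne'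
  have hG2' : Real.Gamma (((d:ℝ)+1)/2) ≠ 0 := hG2.ne'
  have hsπ : 0 < Real.sqrt Real.pi := Real.sqrt_pos.mpr hπ
  have expand : w/r * (Real.sqrt d/Real.sqrt Real.pi) *
      ((r^(d-1)*r) * ((Real.sqrt Real.pi^(d-1)*Real.sqrt Real.pi) / Real.Gamma ((d:ℝ)/2+1)))
      = w * (Real.sqrt Real.pi^(d-1) * r^(d-1)) * Real.sqrt d / Real.Gamma ((d:ℝ)/2+1) := by
    field_simp
  rw [expand, show w * (Real.sqrt Real.pi^(d-1) * r^(d-1) / Real.Gamma (((d:ℝ)+1)/2))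
      = w * (Real.sqrt Real.pi^(d-1) * r^(d-1)) / Real.Gamma (((d:ℝ)+1)/2) from by ring,
    div_le_div_iff₀ hG2 hG1]
  have hpos : 0 ≤ w * (Real.sqrt Real.pi^(d-1) * r^(d-1)) := by positivity
  calc w * (Real.sqrt Real.pi^(d-1) * r^(d-1)) * Real.Gamma ((d:ℝ)/2+1)
      ≤ w * (Real.sqrt Real.pi^(d-1) * r^(d-1)) * (Real.sqrt d * Real.Gamma (((d:ℝ)+1)/2)) :=
        mul_le_mul_of_nonneg_left hkey hpos
    _ = w * (Real.sqrt Real.pi^(d-1) * r^(d-1)) * Real.sqrt d * Real.Gamma (((d:ℝ)+1)/2) := by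
        ring
end

section
/- PCA gradient Lipschitz bound: let A be a real symmetric n×n matrix, x a unit vector in ℝ^n, and for s in the tangent space T_x = {s : xᵀs = 0}, define f̂_x(s) = (x+s)ᵀA(x+s) / (2(1+‖s‖²)). Then its gradient ∇f̂_x (computed within T_x) satisfies ‖∇f̂_x(s) − ∇f̂_x(0)‖ ≤ (5/2)‖A‖‖s‖ for all s ∈ T_x, where ‖A‖ is the operator norm of A. -/
/-!
Write `P v = v - ⟪x, v⟫ x` for the projection onto `xᗮ` and `c = 1 / (1 + ‖s‖²)`. Since `x ⊥ s`,
`‖x + s‖² = 1 + ‖s‖²`, so `2 f̂(s)` is the Rayleigh quotient of `T` at `x + s` and is bounded by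
`‖T‖`. Linearity of `T` and `P` splits the difference of gradients as
`∇f̂(s) - ∇f̂(0) = c • P (T s) - (1 - c) • P (T x) - (c * 2 f̂(s)) • s`,
whose three terms are bounded by `‖T‖ ‖s‖`, `‖s‖ ‖T‖ / 2` (as `1 - c ≤ ‖s‖ / 2`) and `‖T‖ ‖s‖`.
-/

open RealInnerProductSpace

theorem one_sub_one_div_one_add_sq_le {t : ℝ} (ht : 0 ≤ t) : 1 - 1 / (1 + t ^ 2) ≤ t / 2 := by
  have hpos : 0 < 1 + t ^ 2 := by positivity
  rw [one_sub_div hpos.ne', div_le_iff₀ hpos]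
  nlinarith [sq_nonneg (t - 1)]

section

variable {E : Type*} [NormedAddCommGroup E] [InnerProductSpace ℝ E]

theorem norm_sub_inner_smul_sq {x : E} (hx : ‖x‖ = 1) (v : E) :
    ‖v - ⟪x, v⟫ • x‖ ^ 2 = ‖v‖ ^ 2 - ⟪x, v⟫ ^ 2 := by
  rw [norm_sub_sq_real, real_inner_smul_right, norm_smul, real_inner_comm, hx,
    Real.norm_eq_abs, mul_one, sq_abs]
  ring

theorem norm_sub_inner_smul_le {x : E} (hx : ‖x‖ = 1) (v : E) : ‖v - ⟪x, v⟫ • x‖ ≤ ‖v‖ := by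
  refine pow_le_pow_iff_left₀ (norm_nonneg _) (norm_nonneg _) two_ne_zero |>.mp ?_
  rw [norm_sub_inner_smul_sq hx]
  nlinarith [sq_nonneg ⟪x, v⟫]

end

theorem stmt_10_general {E : Type*} [NormedAddCommGroup E] [InnerProductSpace ℝ E]
    (T : E →L[ℝ] E) (x : E) (hx : ‖x‖ = 1)
    (fhat : E → ℝ)
    (hf : ∀ s, fhat s = (1 / (1 + ‖s‖ ^ 2)) * ((1 / 2) * ⟪T (x + s), x + s⟫))
    (grad : E → E)
    (hg : ∀ s, grad s =
      (1 / (1 + ‖s‖ ^ 2)) • ((T (x + s) - ⟪x, T (x + s)⟫ • x) - (2 * fhat s) • s)) :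
    ∀ s : E, ⟪x, s⟫ = 0 → ‖grad s - grad 0‖ ≤ (5 / 2) * ‖T‖ * ‖s‖ := by
  intro s hs
  set c : ℝ := 1 / (1 + ‖s‖ ^ 2)
  have hc0 : 0 < c := by positivity
  have hc1 : c ≤ 1 := div_le_one_of_le₀ (by nlinarith [sq_nonneg ‖s‖]) (by positivity)
  have hnorm : ‖x + s‖ ^ 2 = 1 + ‖s‖ ^ 2 := by
    rw [sq, sq, norm_add_sq_eq_norm_sq_add_norm_sq_real hs, hx, one_mul]
  have hρ : |2 * fhat s| ≤ ‖T‖ := by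
    have hrayleigh : 2 * fhat s = T.rayleighQuotient (x + s) := by
      rw [hf, ContinuousLinearMap.rayleighQuotient, ContinuousLinearMap.reApplyInnerSelf_apply,
        RCLike.re_to_real, hnorm]
      ring
    exact hrayleigh ▸ T.rayleighQuotient_le_norm (x + s)
  have hdec : grad s - grad 0 =
      c • (T s - ⟪x, T s⟫ • x) - (1 - c) • (T x - ⟪x, T x⟫ • x) - (c * (2 * fhat s)) • s := by
    rw [hg s, hg 0, map_add, inner_add_right]
    simp only [norm_zero, add_zero, smul_zero, sub_zero]
    module
  rw [hdec]
  calc _ ≤ c * ‖T s‖ + (1 - c) * ‖T x‖ + c * |2 * fhat s| * ‖s‖ := by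
        grw [norm_sub_le, norm_sub_le, norm_smul, norm_smul, norm_smul, norm_mul,
          norm_sub_inner_smul_le hx, norm_sub_inner_smul_le hx]
        simp only [Real.norm_eq_abs, abs_of_pos hc0, abs_of_nonneg (sub_nonneg.2 hc1), le_refl]
    _ ≤ 1 * (‖T‖ * ‖s‖) + ‖s‖ / 2 * (‖T‖ * ‖x‖) + 1 * ‖T‖ * ‖s‖ := by
        gcongr
        · exact T.le_opNorm s
        · exact one_sub_one_div_one_add_sq_le (norm_nonneg s)
        · exact T.le_opNorm x
    _ = (5 / 2) * ‖T‖ * ‖s‖ := by rw [hx]; ring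

theorem stmt_10 {E : Type*} [NormedAddCommGroup E] [InnerProductSpace ℝ E]
    [CompleteSpace E]
    (T : E →L[ℝ] E) (hT : IsSelfAdjoint T) (x : E) (hx : ‖x‖ = 1)
    (fhat : E → ℝ)
    (hf : ∀ s, fhat s = (1 / (1 + ‖s‖ ^ 2)) * ((1 / 2) * ⟪T (x + s), x + s⟫))
    (grad : E → E)
    (hg : ∀ s, grad s =
      (1 / (1 + ‖s‖ ^ 2)) • ((T (x + s) - ⟪x, T (x + s)⟫ • x) - (2 * fhat s) • s)) :
    ∀ s : E, ⟪x, s⟫ = 0 → ‖grad s - grad 0‖ ≤ (5 / 2) * ‖T‖ * ‖s‖ :=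
  stmt_10_general T x hx fhat hf grad hg
end

section
/- Difference of gradient descent iterates as a perturbed power iteration: let f : E → ℝ be C² on a real inner product space, H = ∇²f(0), and define two gradient descent sequences s_{j+1} = s_j − η∇f(s_j), s'_{j+1} = s'_j − η∇f(s'_j). Then with ŝ_j = s_j − s'_j one has ŝ_{j+1} = (I − ηH)ŝ_j − ηΔ_jŝ_j, where Δ_j = ∫₀¹ (∇²f(s'_j + θ(s_j − s'_j)) − H) dθ. Moreover, if ‖∇²f(u) − ∇²f(0)‖ ≤ ρ‖u‖ for all u in a convex set containing all iterates, and max{‖s_j‖, ‖s'_j‖} ≤ 𝓛, then ‖Δ_j‖ ≤ ρ𝓛. -/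
/-!
By the fundamental theorem of calculus along the segment from `s' j` to `s j`, applied to the
`C¹` map `∇f`, the averaged Hessian satisfies `(H + Δ) (s j - s' j) = ∇f (s j) - ∇f (s' j)`,
which turns the difference of two gradient steps into the perturbed power iteration. The segment
lies in the closed ball of radius `max ‖s j‖ ‖s' j‖`, so the Hessian-Lipschitz bound is at most
`ρ 𝓛` pointwise, hence also on average.
-/

open intervalIntegral Set

theorem ContDiff.gradient {E : Type*} [NormedAddCommGroup E] [InnerProductSpace ℝ E]
    [CompleteSpace E] {f : E → ℝ} {m n : WithTop ℕ∞} (hf : ContDiff ℝ n f) (hmn : m + 1 ≤ n) :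
    ContDiff ℝ m (gradient f) :=
  (InnerProductSpace.toDual ℝ E).symm.contDiff.comp (hf.fderiv_right hmn)

section Segment

variable {E F : Type*} [NormedAddCommGroup E] [NormedSpace ℝ E]

theorem norm_add_smul_sub_le_max {a b : E} {t : ℝ} (ht : t ∈ Icc (0 : ℝ) 1) :
    ‖a + t • (b - a)‖ ≤ max ‖a‖ ‖b‖ := by
  have hmem := (convex_closedBall (0 : E) (max ‖a‖ ‖b‖)).add_smul_sub_mem
    (mem_closedBall_zero_iff.2 (le_max_left _ _)) (mem_closedBall_zero_iff.2 (le_max_right _ _)) ht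
  exact mem_closedBall_zero_iff.1 hmem

variable [NormedAddCommGroup F] [NormedSpace ℝ F] [CompleteSpace F]

theorem ContDiff.integral_fderiv_segment_apply {g : E → F} (hg : ContDiff ℝ 1 g) (a b : E) :
    (∫ θ in (0 : ℝ)..1, fderiv ℝ g (a + θ • (b - a))) (b - a) = g b - g a := by
  have hcont : Continuous fun θ : ℝ ↦ fderiv ℝ g (a + θ • (b - a)) :=
    (hg.continuous_fderiv one_ne_zero).comp (by fun_prop)
  have hderiv : ∀ θ ∈ uIcc (0 : ℝ) 1,
      HasDerivAt (fun t ↦ g (a + t • (b - a))) (fderiv ℝ g (a + θ • (b - a)) (b - a)) θ := by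
    intro θ _
    have hline : HasDerivAt (fun t : ℝ ↦ a + t • (b - a)) (b - a) θ := by
      simpa using ((hasDerivAt_id θ).smul_const (b - a)).const_add a
    exact (hg.differentiable one_ne_zero _).hasFDerivAt.comp_hasDerivAt θ hline
  rw [ContinuousLinearMap.intervalIntegral_apply (hcont.intervalIntegrable 0 1),
    integral_eq_sub_of_hasDerivAt hderiv
      ((hcont.clm_apply continuous_const).intervalIntegrable 0 1)]
  simp

theorem ContDiff.integral_fderiv_sub_segment_apply {g : E → F} (hg : ContDiff ℝ 1 g)
    (H : E →L[ℝ] F) (a b : E) :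
    (∫ θ in (0 : ℝ)..1, (fderiv ℝ g (a + θ • (b - a)) - H)) (b - a) = g b - g a - H (b - a) := by
  have hcont : Continuous fun θ : ℝ ↦ fderiv ℝ g (a + θ • (b - a)) :=
    (hg.continuous_fderiv one_ne_zero).comp (by fun_prop)
  rw [integral_sub (hcont.intervalIntegrable 0 1) intervalIntegrable_const,
    sub_apply, hg.integral_fderiv_segment_apply]
  simp

end Segment

theorem stmt_15_general {E : Type*} [NormedAddCommGroup E] [InnerProductSpace ℝ E]
    [FiniteDimensional ℝ E] (f : E → ℝ) (hf : ContDiff ℝ 2 f)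
    (η ρ 𝓛 : ℝ) (hρ : 0 < ρ)
    (H : E →L[ℝ] E)
    (s s' : ℕ → E)
    (hrec : ∀ k, s (k + 1) = s k - η • gradient f (s k))
    (hrec' : ∀ k, s' (k + 1) = s' k - η • gradient f (s' k))
    (j : ℕ)
    (Δ : E →L[ℝ] E)
    (hΔdef : Δ = ∫ θ in (0:ℝ)..1,
      (fderiv ℝ (gradient f) (s' j + θ • (s j - s' j)) - H))
    (hHlip : ∀ θ ∈ Set.Icc (0:ℝ) 1,
      ‖fderiv ℝ (gradient f) (s' j + θ • (s j - s' j)) - H‖ ≤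
        ρ * ‖s' j + θ • (s j - s' j)‖)
    (hnorms : max ‖s j‖ ‖s' j‖ ≤ 𝓛) :
    s (j + 1) - s' (j + 1) = (1 - η • H) (s j - s' j) - η • Δ (s j - s' j) ∧
      ‖Δ‖ ≤ ρ * 𝓛 := by
  have hΔv : Δ (s j - s' j) = gradient f (s j) - gradient f (s' j) - H (s j - s' j) := by
    rw [hΔdef]
    exact (hf.gradient le_rfl).integral_fderiv_sub_segment_apply H (s' j) (s j)
  refine ⟨?_, ?_⟩
  · rw [hrec, hrec', hΔv]
    simp only [sub_apply, smul_apply, one_apply_eq_self]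
    module
  · have hbound : ∀ θ ∈ uIoc (0 : ℝ) 1,
        ‖fderiv ℝ (gradient f) (s' j + θ • (s j - s' j)) - H‖ ≤ ρ * 𝓛 := fun θ hθ ↦
      have hθ' : θ ∈ Icc (0 : ℝ) 1 := Ioc_subset_Icc_self (by simpa using hθ)
      (hHlip θ hθ').trans <| mul_le_mul_of_nonneg_left
        ((norm_add_smul_sub_le_max hθ').trans (max_comm ‖s' j‖ ‖s j‖ ▸ hnorms)) hρ.le
    simpa [hΔdef] using norm_integral_le_of_norm_le_const hbound

theorem stmt_15 {E : Type*} [NormedAddCommGroup E] [InnerProductSpace ℝ E]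
    [FiniteDimensional ℝ E] (f : E → ℝ) (hf : ContDiff ℝ 2 f)
    (η ρ 𝓛 : ℝ) (hη : 0 < η) (hρ : 0 < ρ) (h𝓛 : 0 < 𝓛)
    (H : E →L[ℝ] E) (hHdef : H = fderiv ℝ (gradient f) 0)
    (s s' : ℕ → E)
    (hrec : ∀ k, s (k + 1) = s k - η • gradient f (s k))
    (hrec' : ∀ k, s' (k + 1) = s' k - η • gradient f (s' k))
    (j : ℕ)
    (Δ : E →L[ℝ] E)
    (hΔdef : Δ = ∫ θ in (0:ℝ)..1,
      (fderiv ℝ (gradient f) (s' j + θ • (s j - s' j)) - H))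
    (hHlip : ∀ θ ∈ Set.Icc (0:ℝ) 1,
      ‖fderiv ℝ (gradient f) (s' j + θ • (s j - s' j)) - H‖ ≤
        ρ * ‖s' j + θ • (s j - s' j)‖)
    (hnorms : max ‖s j‖ ‖s' j‖ ≤ 𝓛) :
    s (j + 1) - s' (j + 1) = (1 - η • H) (s j - s' j) - η • Δ (s j - s' j) ∧
      ‖Δ‖ ≤ ρ * 𝓛 :=
  stmt_15_general f hf η ρ 𝓛 hρ H s s' hrec hrec' j Δ hΔdef hHlip hnorms
end
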